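/- arXiv:2106.14656 — 8 statements merged into one kernel-verified Lean document; each statement's English description precedes it below -/
import Mathlib

section
/- (Algebraic core of Proposition on para-Einstein-like manifolds admitting a para-Ricci-like soliton.) Let (φ, ξ, η) be an apapR structure on V, let a, b, c, λ, μ, ν ∈ ℝ, and let A be a linear endomorphism of V (playing the role of x ↦ ∇_x ξ) such that ⟪A(x), ξ⟫ = 0 for all x, and such that for all x, y: ⟪A(x), y⟫ + ⟪x, A(y)⟫ = −2[(a+λ)⟪x, y⟫ + (b+μ)⟪x, φ(y)⟫ + (b+c+μ+ν)η(x)η(y)]. Then a+b+c = −(λ+μ+ν) and A(ξ) = 0 (i.e. ξ is geodesic). -/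
/-!
Taking `y = ξ` in the identity for `A`, and using `φ ξ = 0`, `⟪x, ξ⟫ = η x` and `⟪A x, ξ⟫ = 0`,
gives `⟪x, A ξ⟫ = -2 (a + b + c + λ + μ + ν) η x`. At `x = ξ` the left side vanishes, so the
constant is zero, and then `A ξ` is orthogonal to every vector.
-/

open RealInnerProductSpace

section

variable {V : Type*} [NormedAddCommGroup V] [InnerProductSpace ℝ V]
  {φ : V →ₗ[ℝ] V} {ξ : V} {η : V →ₗ[ℝ] ℝ}

theorem inner_right_eq_of_compatible (hφξ : φ ξ = 0) (hηξ : η ξ = 1)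
    (hcomp : ∀ x y : V, ⟪φ x, φ y⟫ = ⟪x, y⟫ - η x * η y) (x : V) : ⟪x, ξ⟫ = η x := by
  have h := hcomp x ξ
  rw [hφξ, hηξ, inner_zero_right, mul_one] at h
  linarith

theorem inner_apply_eq_of_inner_add_inner (hφξ : φ ξ = 0) (hξ : ∀ x, ⟪x, ξ⟫ = η x)
    {A : V →ₗ[ℝ] V} {a b c lm mu nu : ℝ} (hAξ : ∀ x : V, ⟪A x, ξ⟫ = 0)
    (hA : ∀ x y : V, ⟪A x, y⟫ + ⟪x, A y⟫ =
      -2 * ((a + lm) * ⟪x, y⟫ + (b + mu) * ⟪x, φ y⟫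
        + (b + c + mu + nu) * (η x * η y)))
    (hηξ : η ξ = 1) (x : V) :
    ⟪x, A ξ⟫ = -2 * (a + b + c + lm + mu + nu) * η x := by
  have h := hA x ξ
  rw [hAξ, hφξ, inner_zero_right, hξ, hηξ] at h
  linear_combination h

end

theorem stmt_9_general {V : Type*} [NormedAddCommGroup V] [InnerProductSpace ℝ V]
    (φ : V →ₗ[ℝ] V) (ξ : V) (η : V →ₗ[ℝ] ℝ)
    (hφξ : φ ξ = 0)
    (hηξ : η ξ = 1)
    (hcomp : ∀ x y : V, ⟪φ x, φ y⟫ = ⟪x, y⟫ - η x * η y)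
    (a b c lm mu nu : ℝ)
    (A : V →ₗ[ℝ] V)
    (hAξ : ∀ x : V, ⟪A x, ξ⟫ = 0)
    (hA : ∀ x y : V, ⟪A x, y⟫ + ⟪x, A y⟫ =
      -2 * ((a + lm) * ⟪x, y⟫ + (b + mu) * ⟪x, φ y⟫
        + (b + c + mu + nu) * (η x * η y))) :
    a + b + c = -(lm + mu + nu) ∧ A ξ = 0 := by
  have hξ := inner_right_eq_of_compatible hφξ hηξ hcomp
  have hAξ' := inner_apply_eq_of_inner_add_inner hφξ hξ hAξ hA hηξ
  have hsum : a + b + c + lm + mu + nu = 0 := by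
    have h := hAξ' ξ
    rw [real_inner_comm, hAξ, hηξ] at h
    linarith
  refine ⟨by linarith, ?_⟩
  have h := hAξ' (A ξ)
  rwa [hsum, mul_zero, zero_mul, inner_self_eq_zero] at h

/-- algebraic core of the proposition on para-Einstein-like manifolds
admitting a para-Ricci-like soliton: with A playing the role of x ↦ ∇ₓξ,
one gets a+b+c = −(λ+μ+ν) and A(ξ) = 0 (ξ is geodesic). -/
theorem stmt_9 {V : Type*} [NormedAddCommGroup V] [InnerProductSpace ℝ V]
    [FiniteDimensional ℝ V] (n : ℕ) (hn : 1 ≤ n)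
    (hdim : Module.finrank ℝ V = 2 * n + 1)
    (φ : V →ₗ[ℝ] V) (ξ : V) (η : V →ₗ[ℝ] ℝ)
    (hφξ : φ ξ = 0)
    (hφ2 : ∀ x : V, φ (φ x) = x - η x • ξ)
    (hηφ : ∀ x : V, η (φ x) = 0)
    (hηξ : η ξ = 1)
    (htr : LinearMap.trace ℝ V φ = 0)
    (hcomp : ∀ x y : V, ⟪φ x, φ y⟫ = ⟪x, y⟫ - η x * η y)
    (a b c lm mu nu : ℝ)
    (A : V →ₗ[ℝ] V)
    (hAξ : ∀ x : V, ⟪A x, ξ⟫ = 0)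
    (hA : ∀ x y : V, ⟪A x, y⟫ + ⟪x, A y⟫ =
      -2 * ((a + lm) * ⟪x, y⟫ + (b + mu) * ⟪x, φ y⟫
        + (b + c + mu + nu) * (η x * η y))) :
    a + b + c = -(lm + mu + nu) ∧ A ξ = 0 :=
  stmt_9_general φ ξ η hφξ hηξ hcomp a b c lm mu nu A hAξ hA
end

section
/- (Algebraic core of: the Reeb vector field of a para-Sasaki-like manifold is not torse-forming.) Let (φ, ξ, η) be an apapR structure on V with n ≥ 1. Then there is no real number f such that φ(x) = f·(x − η(x)ξ) for all x ∈ V; i.e. the para-Sasaki-like condition ∇_x ξ = φ(x) is incompatible with the torse-forming condition ∇_x ξ = f(x − η(x)ξ). -/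
/-!
Write `P = id - ξ ⊗ η`, so that `tr P = (2n + 1) - η ξ = 2n`. If `φ = f • P`, then
`0 = tr φ = 2n f` forces `f = 0`; but then `P = φ ∘ φ = 0`, contradicting `tr P = 2n ≠ 0`.
-/

open RealInnerProductSpace

theorem LinearMap.trace_id_sub_smulRight {R M : Type*} [CommRing R] [AddCommGroup M]
    [Module R M] [Module.Free R M] [Module.Finite R M] (η : M →ₗ[R] R) (ξ : M) :
    LinearMap.trace R M (LinearMap.id - η.smulRight ξ) = Module.finrank R M - η ξ := by
  rw [map_sub, LinearMap.trace_id, LinearMap.trace_smulRight]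

theorem stmt_10_general {V : Type*} [NormedAddCommGroup V] [InnerProductSpace ℝ V]
    [FiniteDimensional ℝ V] (n : ℕ) (hn : 1 ≤ n)
    (hdim : Module.finrank ℝ V = 2 * n + 1)
    (φ : V →ₗ[ℝ] V) (ξ : V) (η : V →ₗ[ℝ] ℝ)
    (hφ2 : ∀ x : V, φ (φ x) = x - η x • ξ)
    (hηξ : η ξ = 1)
    (htr : LinearMap.trace ℝ V φ = 0) :
    ¬ ∃ f : ℝ, ∀ x : V, φ x = f • (x - η x • ξ) := by
  rintro ⟨f, hf⟩
  set P := LinearMap.id - η.smulRight ξ with hP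
  have hn' : (2 * n : ℝ) ≠ 0 := by positivity
  have htrP : LinearMap.trace ℝ V P = 2 * n := by
    rw [hP, LinearMap.trace_id_sub_smulRight, hdim, hηξ]
    push_cast
    ring
  have hφP : φ = f • P := LinearMap.ext hf
  have hf0 : f = 0 := by
    rw [hφP, map_smul, htrP, smul_eq_mul] at htr
    exact (mul_eq_zero.mp htr).resolve_right hn'
  have hP0 : P = 0 := LinearMap.ext fun x =>
    calc P x = φ (φ x) := (hφ2 x).symm
      _ = 0 := by rw [hφP, hf0, zero_smul, LinearMap.zero_apply]
  exact hn' (htrP.symm.trans (by rw [hP0, map_zero]))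

/-- the Reeb vector field of a para-Sasaki-like manifold is not
torse-forming: there is no f ∈ ℝ with φ(x) = f·(x − η(x)ξ) for all x. -/
theorem stmt_10 {V : Type*} [NormedAddCommGroup V] [InnerProductSpace ℝ V]
    [FiniteDimensional ℝ V] (n : ℕ) (hn : 1 ≤ n)
    (hdim : Module.finrank ℝ V = 2 * n + 1)
    (φ : V →ₗ[ℝ] V) (ξ : V) (η : V →ₗ[ℝ] ℝ)
    (hφξ : φ ξ = 0)
    (hφ2 : ∀ x : V, φ (φ x) = x - η x • ξ)
    (hηφ : ∀ x : V, η (φ x) = 0)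
    (hηξ : η ξ = 1)
    (htr : LinearMap.trace ℝ V φ = 0)
    (hcomp : ∀ x y : V, ⟪φ x, φ y⟫ = ⟪x, y⟫ - η x * η y) :
    ¬ ∃ f : ℝ, ∀ x : V, φ x = f • (x - η x • ξ) :=
  stmt_10_general n hn hdim φ ξ η hφ2 hηξ htr
end

section
/- (Example 1, Lie algebra.) For all p, q ∈ ℝ, the antisymmetric bilinear bracket on ℝ⁵ defined on the standard basis e₀, e₁, e₂, e₃, e₄ by [e₀,e₁] = p·e₂ − e₃ + q·e₄, [e₀,e₂] = −p·e₁ − q·e₃ − e₄, [e₀,e₃] = −e₁ + q·e₂ + p·e₄, [e₀,e₄] = −q·e₁ − e₂ − p·e₃, and [eᵢ,eⱼ] = 0 for i, j ∈ {1,2,3,4}, satisfies the Jacobi identity, hence defines a Lie algebra structure on ℝ⁵. -/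
/-!
The bracket is a semidirect product `ℝ e₀ ⋉ V` with `V = span {e₁, …, e₄}` abelian: every
bracket lies in `V`, and `[V, V] = 0`. For such a bracket, writing `x = r e₀ + u`, `y = s e₀ + v`,
`z = t e₀ + w` with `u, v, w ∈ V`, each double bracket only sees `D = ad e₀` restricted to `V`:
`[x, [y, z]] = r s D² w - r t D² v`, and the three cyclic terms cancel in pairs whatever `D` is.
-/

open RealInnerProductSpace

/-- The standard basis of ℝ⁵ (as a Euclidean space). -/
noncomputable def e5 (i : Fin 5) : EuclideanSpace ℝ (Fin 5) :=
  EuclideanSpace.single i 1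

section AbelianIdealOfCodimOne

variable {R L : Type*} [CommRing R] [AddCommGroup L] [Module R L]
  {B : L →ₗ[R] L →ₗ[R] L} {φ : L →ₗ[R] R} {a : L}

theorem exists_eq_smul_add_of_apply_eq_one (hφ : φ a = 1) (x : L) :
    ∃ t : R, ∃ v : L, φ v = 0 ∧ x = t • a + v :=
  ⟨φ x, x - φ x • a, by simp [hφ], (add_sub_cancel _ _).symm⟩

theorem LinearMap.IsAlt.apply_smul_add_smul_add (hB : B.IsAlt)
    (hV : ∀ v w, φ v = 0 → φ w = 0 → B v w = 0) (s t : R) {v w : L}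
    (hv : φ v = 0) (hw : φ w = 0) :
    B (s • a + v) (t • a + w) = s • B a w - t • B a v := by
  simp only [map_add, map_smul, LinearMap.add_apply, LinearMap.smul_apply, hB.self_eq_zero,
    hV v w hv hw, ← hB.neg v a]
  module

theorem LinearMap.apply_smul_add_of_apply_eq_zero (hV : ∀ v w, φ v = 0 → φ w = 0 → B v w = 0)
    (s : R) {v w : L} (hv : φ v = 0) (hw : φ w = 0) : B (s • a + v) w = s • B a w := by
  simp [hV v w hv hw]

theorem LinearMap.IsAlt.apply_apply_eq_zero (hB : B.IsAlt) (hφ : φ a = 1)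
    (hV : ∀ v w, φ v = 0 → φ w = 0 → B v w = 0) (ha : ∀ v, φ v = 0 → φ (B a v) = 0)
    (x y : L) : φ (B x y) = 0 := by
  obtain ⟨s, v, hv, rfl⟩ := exists_eq_smul_add_of_apply_eq_one hφ x
  obtain ⟨t, w, hw, rfl⟩ := exists_eq_smul_add_of_apply_eq_one hφ y
  rw [hB.apply_smul_add_smul_add hV s t hv hw]
  simp [ha v hv, ha w hw]

theorem LinearMap.IsAlt.jacobi_of_apply_eq_one (hB : B.IsAlt) (hφ : φ a = 1)
    (hV : ∀ v w, φ v = 0 → φ w = 0 → B v w = 0) (ha : ∀ v, φ v = 0 → φ (B a v) = 0)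
    (x y z : L) : B x (B y z) + B y (B z x) + B z (B x y) = 0 := by
  have hB₀ := hB.apply_apply_eq_zero hφ hV ha
  obtain ⟨r, u, hu, rfl⟩ := exists_eq_smul_add_of_apply_eq_one hφ x
  obtain ⟨s, v, hv, rfl⟩ := exists_eq_smul_add_of_apply_eq_one hφ y
  obtain ⟨t, w, hw, rfl⟩ := exists_eq_smul_add_of_apply_eq_one hφ z
  rw [B.apply_smul_add_of_apply_eq_zero hV r hu (hB₀ _ _),
    B.apply_smul_add_of_apply_eq_zero hV s hv (hB₀ _ _),
    B.apply_smul_add_of_apply_eq_zero hV t hw (hB₀ _ _),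
    hB.apply_smul_add_smul_add hV s t hv hw, hB.apply_smul_add_smul_add hV t r hw hu,
    hB.apply_smul_add_smul_add hV r s hu hv]
  simp only [map_sub, map_smul, smul_sub, smul_smul]
  module

end AbelianIdealOfCodimOne

theorem eq_sum_e5_succ_of_apply_zero {v : EuclideanSpace ℝ (Fin 5)} (hv : v 0 = 0) :
    v = ∑ i : Fin 4, v i.succ • e5 i.succ := by
  ext i
  fin_cases i <;> simp [e5, Fin.sum_univ_four, hv]

theorem LinearMap.apply_eq_zero_of_apply_e5_succ {M : Type*} [AddCommGroup M] [Module ℝ M]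
    {B : EuclideanSpace ℝ (Fin 5) →ₗ[ℝ] EuclideanSpace ℝ (Fin 5) →ₗ[ℝ] M}
    (h : ∀ i j : Fin 4, B (e5 i.succ) (e5 j.succ) = 0) {v w : EuclideanSpace ℝ (Fin 5)}
    (hv : v 0 = 0) (hw : w 0 = 0) : B v w = 0 := by
  rw [eq_sum_e5_succ_of_apply_zero hv, eq_sum_e5_succ_of_apply_zero hw]
  simp [map_sum, h]

/-- Example 1, Lie algebra: the antisymmetric bilinear bracket on ℝ⁵
defined on the standard basis by [e₀,e₁] = p·e₂ − e₃ + q·e₄,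
[e₀,e₂] = −p·e₁ − q·e₃ − e₄, [e₀,e₃] = −e₁ + q·e₂ + p·e₄,
[e₀,e₄] = −q·e₁ − e₂ − p·e₃ and [eᵢ,eⱼ] = 0 for i,j ∈ {1,2,3,4}
satisfies the Jacobi identity. -/
theorem stmt_12 (p q : ℝ)
    (B : EuclideanSpace ℝ (Fin 5) →ₗ[ℝ] EuclideanSpace ℝ (Fin 5) →ₗ[ℝ] EuclideanSpace ℝ (Fin 5))
    (hanti : ∀ x y : EuclideanSpace ℝ (Fin 5), B x y = -B y x)
    (h01 : B (e5 0) (e5 1) = p • e5 2 - e5 3 + q • e5 4)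
    (h02 : B (e5 0) (e5 2) = (-p) • e5 1 - q • e5 3 - e5 4)
    (h03 : B (e5 0) (e5 3) = -e5 1 + q • e5 2 + p • e5 4)
    (h04 : B (e5 0) (e5 4) = (-q) • e5 1 - e5 2 - p • e5 3)
    (hij : ∀ i j : Fin 5, i ≠ 0 → j ≠ 0 → B (e5 i) (e5 j) = 0) :
    ∀ x y z : EuclideanSpace ℝ (Fin 5),
      B x (B y z) + B y (B z x) + B z (B x y) = 0 := by
  have hB : B.IsAlt := fun x => by
    have h2 : (2 : ℝ) • B x x = 0 := by rw [two_smul]; nth_rw 1 [hanti]; exact neg_add_cancel _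
    exact (smul_eq_zero.mp h2).resolve_left two_ne_zero
  have hV : ∀ v w : EuclideanSpace ℝ (Fin 5), v 0 = 0 → w 0 = 0 → B v w = 0 :=
    fun v w => B.apply_eq_zero_of_apply_e5_succ
      (fun i j => hij _ _ (Fin.succ_ne_zero i) (Fin.succ_ne_zero j))
  have ha : ∀ v : EuclideanSpace ℝ (Fin 5), v 0 = 0 → B (e5 0) v 0 = 0 := by
    intro v hv
    rw [eq_sum_e5_succ_of_apply_zero hv]
    simp only [Fin.sum_univ_four, Fin.reduceSucc, map_add, map_smul, h01, h02, h03, h04]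
    simp [e5]
  exact hB.jacobi_of_apply_eq_one (φ := (EuclideanSpace.proj (𝕜 := ℝ) 0).toLinearMap)
    (a := e5 0)
    (by simp [e5]) (by simpa using hV) (by simpa using ha)
end

section
/- (Example 1, para-Sasaki-like property.) Consider ℝ⁵ with the standard inner product ⟪·,·⟫, standard basis e₀,…,e₄, the Lie bracket [e₀,e₁] = p·e₂ − e₃ + q·e₄, [e₀,e₂] = −p·e₁ − q·e₃ − e₄, [e₀,e₃] = −e₁ + q·e₂ + p·e₄, [e₀,e₄] = −q·e₁ − e₂ − p·e₃, [eᵢ,eⱼ] = 0 for i, j ∈ {1,2,3,4} (p, q ∈ ℝ), and the Koszul product ∇ defined by 2⟪∇ₓy, z⟫ = ⟪[x,y], z⟫ − ⟪[y,z], x⟫ + ⟪[z,x], y⟫. Let ξ = e₀, η = ⟪·, e₀⟫, and let φ be the linear map with φ(e₀) = 0, φ(e₁) = e₃, φ(e₂) = e₄, φ(e₃) = e₁, φ(e₄) = e₂. Then for all x, y ∈ ℝ⁵: ∇ₓ(φ(y)) − φ(∇ₓy) = −⟪x, y⟫·ξ − η(y)·x + 2η(x)η(y)·ξ; i.e. the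 structure is para-Sasaki-like. -/
/-!
The Lie algebra is the semidirect product `ℝ e₀ ⋉ ℝ⁴` with abelian ideal `ℝ⁴ = e₀^⊥`, and
`ad e₀ = K - φ` splits into a skew-symmetric part `K` (the `p`, `q` terms) and the symmetric
part `-φ`. For a bracket `[x, y] = η(x) A y - η(y) A x` of this shape the Koszul formula gives
`∇ₓ y = η(x) K y - ⟪φ x, y⟫ ξ + η(y) φ x`. Since `K` commutes with `φ`, the `K`-terms drop out of
`(∇ₓ φ) y`, and `φ² = id - η ⊗ ξ` together with the symmetry of `φ` leaves exactly the
para-Sasaki-like expression.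
-/

open RealInnerProductSpace

section
variable {E : Type*} [NormedAddCommGroup E] [InnerProductSpace ℝ E]

def semidirectBracket (ξ : E) (A : E →ₗ[ℝ] E) : E →ₗ[ℝ] E →ₗ[ℝ] E :=
  LinearMap.mk₂ ℝ (fun x y => ⟪x, ξ⟫ • A y - ⟪y, ξ⟫ • A x)
    (fun x x' y => by simp only [inner_add_left, map_add, add_smul, smul_add]; abel)
    (fun c x y => by simp only [real_inner_smul_left, map_smul, smul_sub, smul_smul, mul_comm c])
    (fun x y y' => by simp only [inner_add_left, map_add, add_smul, smul_add]; abel)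
    (fun c x y => by simp only [real_inner_smul_left, map_smul, smul_sub, smul_smul, mul_comm c])

@[simp] theorem semidirectBracket_apply (ξ : E) (A : E →ₗ[ℝ] E) (x y : E) :
    semidirectBracket ξ A x y = ⟪x, ξ⟫ • A y - ⟪y, ξ⟫ • A x := rfl

theorem eq_semidirectBracket_of_orthonormalBasis {ι : Type*} [Fintype ι] [DecidableEq ι]
    (b : OrthonormalBasis ι ℝ E) (i₀ : ι) (A : E →ₗ[ℝ] E) (B : E →ₗ[ℝ] E →ₗ[ℝ] E)
    (hanti : ∀ x y, B x y = -B y x)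
    (hξ : ∀ j, j ≠ i₀ → B (b i₀) (b j) = A (b j))
    (hperp : ∀ i j, i ≠ i₀ → j ≠ i₀ → B (b i) (b j) = 0) :
    B = semidirectBracket (b i₀) A := by
  refine LinearMap.ext_basis b.toBasis b.toBasis fun i j => ?_
  simp only [OrthonormalBasis.coe_toBasis, semidirectBracket_apply, b.inner_eq_ite]
  by_cases hi : i = i₀ <;> by_cases hj : j = i₀
  · rw [hi, hj]
    have h := hanti (b i₀) (b i₀)
    rw [eq_neg_iff_add_eq_zero, ← two_smul ℝ] at h
    simpa using h
  · subst hi; simp [hj, hξ j hj]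
  · subst hj; simp [hi, hanti (b i), hξ i hi]
  · simp [hi, hj, hperp i j hi hj]

theorem eq_of_koszul_semidirectBracket (ξ : E) (K φ : E →ₗ[ℝ] E)
    (hK : ∀ x y, ⟪K x, y⟫ = -⟪K y, x⟫) (hφ : φ.IsSymmetric)
    (nab : E →ₗ[ℝ] E →ₗ[ℝ] E)
    (hKoszul : ∀ x y z, 2 * ⟪nab x y, z⟫ = ⟪semidirectBracket ξ (K - φ) x y, z⟫
      - ⟪semidirectBracket ξ (K - φ) y z, x⟫ + ⟪semidirectBracket ξ (K - φ) z x, y⟫)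
    (x y : E) : nab x y = ⟪x, ξ⟫ • K y - ⟪φ x, y⟫ • ξ + ⟪y, ξ⟫ • φ x := by
  refine ext_inner_right ℝ fun z => ?_
  have h := hKoszul x y z
  simp only [semidirectBracket_apply, LinearMap.sub_apply, inner_sub_left, inner_add_left,
    real_inner_smul_left] at h ⊢
  have hφ' (a b : E) : ⟪φ a, b⟫ = ⟪φ b, a⟫ := by rw [hφ, real_inner_comm]
  rw [hK z x, hK y x, hK z y, hφ' z x, hφ' y x, hφ' z y] at h
  rw [real_inner_comm z ξ]
  linarith

/-- The para-Sasaki-like condition, with `(∇ₓφ)y` written out as `∇ₓ(φy) - φ(∇ₓy)` and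
`η = ⟪·, ξ⟫`. -/
def IsParaSasakiLike (nab : E →ₗ[ℝ] E →ₗ[ℝ] E) (φ : E →ₗ[ℝ] E) (ξ : E) : Prop :=
  ∀ x y, nab x (φ y) - φ (nab x y) = -(⟪x, y⟫ • ξ) - ⟪y, ξ⟫ • x + (2 * (⟪x, ξ⟫ * ⟪y, ξ⟫)) • ξ

theorem isParaSasakiLike_of_eq (ξ : E) (K φ : E →ₗ[ℝ] E) (nab : E →ₗ[ℝ] E →ₗ[ℝ] E)
    (hnab : ∀ x y, nab x y = ⟪x, ξ⟫ • K y - ⟪φ x, y⟫ • ξ + ⟪y, ξ⟫ • φ x)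
    (hφ : φ.IsSymmetric) (hφξ : φ ξ = 0) (hφφ : ∀ x, φ (φ x) = x - ⟪x, ξ⟫ • ξ)
    (hKφ : Commute K φ) : IsParaSasakiLike nab φ ξ := by
  intro x y
  have hφy : ⟪φ y, ξ⟫ = 0 := by rw [hφ, hφξ, inner_zero_right]
  have hφxφy : ⟪φ x, φ y⟫ = ⟪x, y⟫ - ⟪x, ξ⟫ * ⟪y, ξ⟫ := by
    rw [← hφ, hφφ, inner_sub_left, real_inner_smul_left, real_inner_comm y ξ]
  have hKφy : K (φ y) = φ (K y) := LinearMap.congr_fun hKφ.eq y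
  rw [hnab, hnab, hφy, hφxφy, hKφy, map_add, map_sub, map_smul, map_smul, map_smul, hφξ, hφφ]
  module

end

open scoped Matrix

/-- The skew-symmetric part of `ad e₀`; its symmetric part is `-phiMatrix`. -/
def skewPartMatrix (p q : ℝ) : Matrix (Fin 5) (Fin 5) ℝ :=
  !![0, 0, 0, 0, 0; 0, 0, -p, 0, -q; 0, p, 0, q, 0; 0, 0, -q, 0, -p; 0, q, 0, p, 0]

def phiMatrix : Matrix (Fin 5) (Fin 5) ℝ :=
  !![0, 0, 0, 0, 0; 0, 0, 0, 1, 0; 0, 0, 0, 0, 1; 0, 1, 0, 0, 0; 0, 0, 1, 0, 0]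

theorem inner_toEuclideanLin_skewPartMatrix (p q : ℝ) (x y : EuclideanSpace ℝ (Fin 5)) :
    ⟪Matrix.toEuclideanLin (skewPartMatrix p q) x, y⟫ =
      -⟪Matrix.toEuclideanLin (skewPartMatrix p q) y, x⟫ := by
  have hskew : (skewPartMatrix p q)ᴴ = -skewPartMatrix p q := by
    ext i j; fin_cases i <;> fin_cases j <;> simp [skewPartMatrix]
  rw [← LinearMap.adjoint_inner_right, ← Matrix.toEuclideanLin_conjTranspose_eq_adjoint, hskew,
    map_neg, LinearMap.neg_apply, inner_neg_right, real_inner_comm]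

theorem isSymmetric_toEuclideanLin_phiMatrix : (Matrix.toEuclideanLin phiMatrix).IsSymmetric :=
  Matrix.isSymmetric_toEuclideanLin_iff.mpr <| by
    ext i j; fin_cases i <;> fin_cases j <;> simp [phiMatrix]

theorem toEuclideanLin_phiMatrix_apply_apply (x : EuclideanSpace ℝ (Fin 5)) :
    Matrix.toEuclideanLin phiMatrix (Matrix.toEuclideanLin phiMatrix x) = x - ⟪x, e5 0⟫ • e5 0 := by
  ext j; fin_cases j <;>
    simp [e5, phiMatrix, Matrix.toLpLin_apply, dotProduct, Fin.sum_univ_five,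
      EuclideanSpace.inner_single_right]

theorem commute_toEuclideanLin_skewPartMatrix_phiMatrix (p q : ℝ) :
    Commute (Matrix.toEuclideanLin (skewPartMatrix p q)) (Matrix.toEuclideanLin phiMatrix) := by
  refine Commute.map (f := Matrix.toLpLinAlgEquiv 2) ?_
  ext i j; fin_cases i <;> fin_cases j <;>
    simp [skewPartMatrix, phiMatrix, Matrix.mul_apply, Fin.sum_univ_five]

theorem eq_toEuclideanLin_phiMatrix (φ : EuclideanSpace ℝ (Fin 5) →ₗ[ℝ] EuclideanSpace ℝ (Fin 5))
    (hφ0 : φ (e5 0) = 0) (hφ1 : φ (e5 1) = e5 3) (hφ2 : φ (e5 2) = e5 4)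
    (hφ3 : φ (e5 3) = e5 1) (hφ4 : φ (e5 4) = e5 2) :
    φ = Matrix.toEuclideanLin phiMatrix := by
  refine (EuclideanSpace.basisFun (Fin 5) ℝ).toBasis.ext fun i => ?_
  rw [OrthonormalBasis.coe_toBasis, EuclideanSpace.basisFun_apply]
  change φ (e5 i) = Matrix.toEuclideanLin phiMatrix (e5 i)
  fin_cases i <;>
    simp only [Fin.zero_eta, Fin.mk_one, Fin.reduceFinMk, hφ0, hφ1, hφ2, hφ3, hφ4] <;>
    ext j <;> fin_cases j <;> simp [e5, phiMatrix, Matrix.toLpLin_apply]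

theorem bracket_e5_zero_eq (p q : ℝ)
    (B : EuclideanSpace ℝ (Fin 5) →ₗ[ℝ] EuclideanSpace ℝ (Fin 5) →ₗ[ℝ] EuclideanSpace ℝ (Fin 5))
    (h01 : B (e5 0) (e5 1) = p • e5 2 - e5 3 + q • e5 4)
    (h02 : B (e5 0) (e5 2) = (-p) • e5 1 - q • e5 3 - e5 4)
    (h03 : B (e5 0) (e5 3) = -e5 1 + q • e5 2 + p • e5 4)
    (h04 : B (e5 0) (e5 4) = (-q) • e5 1 - e5 2 - p • e5 3) (j : Fin 5) (hj : j ≠ 0) :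
    B (e5 0) (e5 j) =
      (Matrix.toEuclideanLin (skewPartMatrix p q) - Matrix.toEuclideanLin phiMatrix) (e5 j) := by
  fin_cases j
  · exact absurd rfl hj
  all_goals
    simp only [Fin.mk_one, Fin.reduceFinMk, h01, h02, h03, h04]
    ext k; fin_cases k <;> simp [e5, skewPartMatrix, phiMatrix, Matrix.toLpLin_apply]

/-- Example 1, para-Sasaki-like property: for the 5-dimensional Lie
group of Example 1 with ξ = e₀, η = ⟪·,e₀⟫ and φ given by φ(e₀) = 0, φ(e₁) = e₃,
φ(e₂) = e₄, φ(e₃) = e₁, φ(e₄) = e₂, one has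
(∇ₓφ)y = −⟪x,y⟫ξ − η(y)x + 2η(x)η(y)ξ; i.e. the structure is para-Sasaki-like. -/
theorem stmt_14 (p q : ℝ)
    (B : EuclideanSpace ℝ (Fin 5) →ₗ[ℝ] EuclideanSpace ℝ (Fin 5) →ₗ[ℝ] EuclideanSpace ℝ (Fin 5))
    (hanti : ∀ x y : EuclideanSpace ℝ (Fin 5), B x y = -B y x)
    (h01 : B (e5 0) (e5 1) = p • e5 2 - e5 3 + q • e5 4)
    (h02 : B (e5 0) (e5 2) = (-p) • e5 1 - q • e5 3 - e5 4)
    (h03 : B (e5 0) (e5 3) = -e5 1 + q • e5 2 + p • e5 4)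
    (h04 : B (e5 0) (e5 4) = (-q) • e5 1 - e5 2 - p • e5 3)
    (hij : ∀ i j : Fin 5, i ≠ 0 → j ≠ 0 → B (e5 i) (e5 j) = 0)
    (nab : EuclideanSpace ℝ (Fin 5) →ₗ[ℝ] EuclideanSpace ℝ (Fin 5) →ₗ[ℝ] EuclideanSpace ℝ (Fin 5))
    (hKoszul : ∀ x y z : EuclideanSpace ℝ (Fin 5),
      2 * ⟪nab x y, z⟫ = ⟪B x y, z⟫ - ⟪B y z, x⟫ + ⟪B z x, y⟫)
    (φ : EuclideanSpace ℝ (Fin 5) →ₗ[ℝ] EuclideanSpace ℝ (Fin 5))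
    (hφ0 : φ (e5 0) = 0) (hφ1 : φ (e5 1) = e5 3) (hφ2 : φ (e5 2) = e5 4)
    (hφ3 : φ (e5 3) = e5 1) (hφ4 : φ (e5 4) = e5 2) :
    ∀ x y : EuclideanSpace ℝ (Fin 5),
      nab x (φ y) - φ (nab x y) =
        -(⟪x, y⟫ • e5 0) - ⟪y, e5 0⟫ • x
          + (2 * (⟪x, e5 0⟫ * ⟪y, e5 0⟫)) • e5 0 := by
  obtain rfl := eq_toEuclideanLin_phiMatrix φ hφ0 hφ1 hφ2 hφ3 hφ4
  set K := Matrix.toEuclideanLin (skewPartMatrix p q)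
  set φ := Matrix.toEuclideanLin phiMatrix
  have hbasis : ⇑(EuclideanSpace.basisFun (Fin 5) ℝ) = e5 := funext fun i => by simp [e5]
  have hB : B = semidirectBracket (e5 0) (K - φ) := by
    have := eq_semidirectBracket_of_orthonormalBasis (EuclideanSpace.basisFun (Fin 5) ℝ) 0
      (K - φ) B hanti (by rw [hbasis]; exact bracket_e5_zero_eq p q B h01 h02 h03 h04)
      (by rw [hbasis]; exact hij)
    rwa [hbasis] at this
  subst hB
  exact isParaSasakiLike_of_eq _ K φ nab
    (eq_of_koszul_semidirectBracket _ K φ (inner_toEuclideanLin_skewPartMatrix p q)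
      isSymmetric_toEuclideanLin_phiMatrix nab hKoszul)
    isSymmetric_toEuclideanLin_phiMatrix hφ0 toEuclideanLin_phiMatrix_apply_apply
    (commute_toEuclideanLin_skewPartMatrix_phiMatrix p q)
end

section
/- (Example 2, Einstein property.) Consider ℝ³ with the standard inner product ⟪·,·⟫, standard basis e₀, e₁, e₂, and the Lie bracket [e₀,e₁] = p·e₁, [e₀,e₂] = p·e₂, [e₁,e₂] = 0 for a fixed p ∈ ℝ. Let ∇ be the bilinear map defined by the Koszul formula 2⟪∇ₓy, z⟫ = ⟪[x,y], z⟫ − ⟪[y,z], x⟫ + ⟪[z,x], y⟫, let R(x,y)z = ∇ₓ(∇_y z) − ∇_y(∇ₓ z) − ∇_{[x,y]}z, and let ρ(x,y) = Σᵢ₌₀² ⟪R(eᵢ, x)y, eᵢ⟫. Then ρ(x, y) = −2p²·⟪x, y⟫ for all x, y; i.e. the manifold is Einstein with constants (a, b, c) = (−2p², 0, 0). -/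
/-! The bracket is `[x, y] = p (⟪e₀, x⟫ y - ⟪e₀, y⟫ x)`, the Lie algebra of real hyperbolic space.
The Koszul formula gives `∇ₓ y = p (⟪x, y⟫ e₀ - ⟪e₀, y⟫ x)`, whose curvature is that of constant
sectional curvature `-p²` because `e₀` is a unit vector; tracing this curvature over an orthonormal
basis of ℝⁿ gives `ρ = -(n - 1) p² ⟪·, ·⟫`. -/

open RealInnerProductSpace

noncomputable def e3 (i : Fin 3) : EuclideanSpace ℝ (Fin 3) :=
  EuclideanSpace.single i 1

section ConstantCurvature

variable {E : Type*} [NormedAddCommGroup E] [InnerProductSpace ℝ E]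

def constCurvatureTensor (κ : ℝ) (x y z : E) : E := κ • (⟪y, z⟫ • x - ⟪x, z⟫ • y)

theorem levi_civita_eq_of_koszul {p : ℝ} {u : E} {B nab : E → E → E}
    (hB : ∀ x y, B x y = p • (⟪u, x⟫ • y - ⟪u, y⟫ • x))
    (hKoszul : ∀ x y z, 2 * ⟪nab x y, z⟫ = ⟪B x y, z⟫ - ⟪B y z, x⟫ + ⟪B z x, y⟫) (x y : E) :
    nab x y = p • (⟪x, y⟫ • u - ⟪u, y⟫ • x) := by
  refine ext_inner_right ℝ fun z => ?_
  have h := hKoszul x y z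
  simp only [hB, real_inner_smul_left, inner_sub_left] at h ⊢
  rw [real_inner_comm x z, real_inner_comm x y, real_inner_comm y z] at h
  linarith

theorem curvature_eq_constCurvatureTensor {p : ℝ} {u : E} (hu : ⟪u, u⟫ = 1) {B nab : E → E → E}
    (hB : ∀ x y, B x y = p • (⟪u, x⟫ • y - ⟪u, y⟫ • x))
    (hnab : ∀ x y, nab x y = p • (⟪x, y⟫ • u - ⟪u, y⟫ • x)) (x y z : E) :
    nab x (nab y z) - nab y (nab x z) - nab (B x y) z = constCurvatureTensor (-p ^ 2) x y z := by
  simp only [constCurvatureTensor, hB, hnab, real_inner_smul_left, inner_sub_left,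
    real_inner_smul_right, inner_sub_right, hu]
  simp only [real_inner_comm u, real_inner_comm x y]
  module

theorem OrthonormalBasis.sum_inner_constCurvatureTensor {ι : Type*} [Fintype ι]
    (b : OrthonormalBasis ι ℝ E) (κ : ℝ) (x y : E) :
    ∑ i, ⟪constCurvatureTensor κ (b i) x y, b i⟫ = κ * (Fintype.card ι - 1) * ⟪x, y⟫ := by
  simp only [constCurvatureTensor, real_inner_smul_left, inner_sub_left, b.inner_eq_one,
    ← Finset.mul_sum, Finset.sum_sub_distrib]
  simp only [mul_comm ⟪b _, y⟫, b.sum_inner_mul_inner, Finset.sum_const, Finset.card_univ,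
    nsmul_eq_mul, mul_one]
  ring

end ConstantCurvature

theorem basisFun_eq_e3 (i : Fin 3) : EuclideanSpace.basisFun (Fin 3) ℝ i = e3 i :=
  EuclideanSpace.basisFun_apply _ _ i

theorem inner_e3_e3 (i j : Fin 3) : ⟪e3 i, e3 j⟫ = if i = j then 1 else 0 := by
  simpa only [basisFun_eq_e3] using
    orthonormal_iff_ite.mp (EuclideanSpace.basisFun (Fin 3) ℝ).orthonormal i j

theorem bracket_eq_of_structure_constants {p : ℝ}
    {B : EuclideanSpace ℝ (Fin 3) →ₗ[ℝ] EuclideanSpace ℝ (Fin 3) →ₗ[ℝ] EuclideanSpace ℝ (Fin 3)}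
    (hanti : ∀ x y, B x y = -B y x) (h01 : B (e3 0) (e3 1) = p • e3 1)
    (h02 : B (e3 0) (e3 2) = p • e3 2) (h12 : B (e3 1) (e3 2) = 0)
    (x y : EuclideanSpace ℝ (Fin 3)) :
    B x y = p • (⟪e3 0, x⟫ • y - ⟪e3 0, y⟫ • x) := by
  have hdiag (i : Fin 3) : B (e3 i) (e3 i) = 0 := by
    have h := hanti (e3 i) (e3 i)
    rwa [eq_neg_iff_add_eq_zero, ← two_smul ℝ, smul_eq_zero, or_iff_right two_ne_zero] at h
  rw [← (EuclideanSpace.basisFun (Fin 3) ℝ).sum_repr x,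
    ← (EuclideanSpace.basisFun (Fin 3) ℝ).sum_repr y]
  simp only [Fin.sum_univ_three, basisFun_eq_e3, map_add, map_smul, LinearMap.add_apply,
    LinearMap.smul_apply, inner_add_right, real_inner_smul_right, inner_e3_e3, hdiag, h01, h02, h12,
    hanti (e3 1) (e3 0), hanti (e3 2) (e3 0), hanti (e3 2) (e3 1)]
  simp only [Fin.reduceEq, if_true, if_false]
  module

/-- Example 2, Einstein property: for the 3-dimensional Lie group
with bracket [e₀,e₁] = p·e₁, [e₀,e₂] = p·e₂, [e₁,e₂] = 0, the Ricci form of the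
Koszul (Levi-Civita) product satisfies ρ(x,y) = −2p²·⟪x,y⟫; i.e. the manifold is
Einstein with constants (a,b,c) = (−2p²,0,0). -/
theorem stmt_16 (p : ℝ)
    (B : EuclideanSpace ℝ (Fin 3) →ₗ[ℝ] EuclideanSpace ℝ (Fin 3) →ₗ[ℝ] EuclideanSpace ℝ (Fin 3))
    (hanti : ∀ x y : EuclideanSpace ℝ (Fin 3), B x y = -B y x)
    (h01 : B (e3 0) (e3 1) = p • e3 1)
    (h02 : B (e3 0) (e3 2) = p • e3 2)
    (h12 : B (e3 1) (e3 2) = 0)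
    (nab : EuclideanSpace ℝ (Fin 3) →ₗ[ℝ] EuclideanSpace ℝ (Fin 3) →ₗ[ℝ] EuclideanSpace ℝ (Fin 3))
    (hKoszul : ∀ x y z : EuclideanSpace ℝ (Fin 3),
      2 * ⟪nab x y, z⟫ = ⟪B x y, z⟫ - ⟪B y z, x⟫ + ⟪B z x, y⟫)
    (R : EuclideanSpace ℝ (Fin 3) → EuclideanSpace ℝ (Fin 3) →
      EuclideanSpace ℝ (Fin 3) → EuclideanSpace ℝ (Fin 3))
    (hR : ∀ x y z : EuclideanSpace ℝ (Fin 3),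
      R x y z = nab x (nab y z) - nab y (nab x z) - nab (B x y) z)
    (ρ : EuclideanSpace ℝ (Fin 3) → EuclideanSpace ℝ (Fin 3) → ℝ)
    (hρ : ∀ x y : EuclideanSpace ℝ (Fin 3), ρ x y = ∑ i : Fin 3, ⟪R (e3 i) x y, e3 i⟫) :
    ∀ x y : EuclideanSpace ℝ (Fin 3),
      ρ x y = -(2 * p ^ 2) * ⟪x, y⟫ := by
  intro x y
  have hB := bracket_eq_of_structure_constants hanti h01 h02 h12
  have hnab := levi_civita_eq_of_koszul hB hKoszul
  have hu : ⟪e3 0, e3 0⟫ = 1 := (inner_e3_e3 0 0).trans (if_pos rfl)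
  simp only [hρ, hR, curvature_eq_constCurvatureTensor hu hB hnab, ← basisFun_eq_e3,
    OrthonormalBasis.sum_inner_constCurvatureTensor, Fintype.card_fin]
  ring
end

section
/- (Example 2, torse-forming Reeb vector field.) Consider ℝ³ with the standard inner product ⟪·,·⟫, standard basis e₀, e₁, e₂, the Lie bracket [e₀,e₁] = p·e₁, [e₀,e₂] = p·e₂, [e₁,e₂] = 0 (p ∈ ℝ), and the Koszul product ∇ defined by 2⟪∇ₓy, z⟫ = ⟪[x,y], z⟫ − ⟪[y,z], x⟫ + ⟪[z,x], y⟫. Let ξ = e₀ and η = ⟪·, e₀⟫. Then for all x ∈ ℝ³: ∇ₓξ = −p·(x − η(x)·ξ); i.e. ξ is torse-forming with constant f = −p. -/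
open RealInnerProductSpace

/-!
By the Koszul formula, `∇ₓξ = -ad_ξ x` as soon as `ad_ξ` is symmetric and `ξ` is orthogonal to
the derived algebra `[𝔤, 𝔤]`. Here `ad_{e₀} = p · (id - η ⊗ e₀)` is `p` times the orthogonal
projection onto `e₀^⊥`, and `[𝔤, 𝔤] ⊆ span {e₁, e₂}`.
-/

lemma apply_self_eq_zero_of_antisymm {M : Type*} [AddCommGroup M] [Module ℝ M]
    (B : M →ₗ[ℝ] M →ₗ[ℝ] M) (hanti : ∀ x y, B x y = -B y x) (x : M) : B x x = 0 :=
  have : IsAddTorsionFree M := .of_isTorsionFree ℝ M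
  self_eq_neg.mp (hanti x x)

section Koszul

variable {E : Type*} [NormedAddCommGroup E] [InnerProductSpace ℝ E]

theorem koszul_apply_right_eq_neg_of_isSymmetric (B nab : E →ₗ[ℝ] E →ₗ[ℝ] E)
    (hanti : ∀ x y, B x y = -B y x)
    (hKoszul : ∀ x y z, 2 * ⟪nab x y, z⟫ = ⟪B x y, z⟫ - ⟪B y z, x⟫ + ⟪B z x, y⟫)
    {ξ : E} (hsymm : (B ξ).IsSymmetric) (horth : ∀ x y, ⟪B x y, ξ⟫ = 0) (x : E) :
    nab x ξ = -B ξ x := by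
  refine ext_inner_right ℝ fun z ↦ ?_
  have hK := hKoszul x ξ z
  rw [hanti x ξ, horth, inner_neg_left, hsymm z x, real_inner_comm (B ξ x) z] at hK
  rw [inner_neg_left]
  linarith

theorem isSymmetric_of_apply_eq_smul_sub_inner_smul {T : E →ₗ[ℝ] E} (p : ℝ) (e : E)
    (hT : ∀ v, T v = p • (v - ⟪v, e⟫ • e)) : T.IsSymmetric := by
  intro v w
  simp only [hT, real_inner_smul_left, real_inner_smul_right, inner_sub_left, inner_sub_right,
    real_inner_comm e]
  ring

end Koszul

section Example

variable {p : ℝ} {B : EuclideanSpace ℝ (Fin 3) →ₗ[ℝ] EuclideanSpace ℝ (Fin 3) →ₗ[ℝ] EuclideanSpace ℝ (Fin 3)}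

lemma eq_sum_smul_e3 (v : EuclideanSpace ℝ (Fin 3)) :
    v = v 0 • e3 0 + v 1 • e3 1 + v 2 • e3 2 := by
  ext i
  fin_cases i <;> simp [e3]

lemma inner_e3_zero (v : EuclideanSpace ℝ (Fin 3)) : ⟪v, e3 0⟫ = v 0 := by
  simp [e3, EuclideanSpace.inner_single_right]

lemma bracket_e3_zero_apply (hanti : ∀ x y, B x y = -B y x)
    (h01 : B (e3 0) (e3 1) = p • e3 1) (h02 : B (e3 0) (e3 2) = p • e3 2)
    (v : EuclideanSpace ℝ (Fin 3)) : B (e3 0) v = p • (v - ⟪v, e3 0⟫ • e3 0) := by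
  have h00 : B (e3 0) (e3 0) = 0 := apply_self_eq_zero_of_antisymm B hanti _
  conv_lhs => rw [eq_sum_smul_e3 v]
  rw [map_add, map_add, map_smul, map_smul, map_smul, h00, h01, h02, inner_e3_zero]
  ext i
  fin_cases i <;> simp [e3, mul_comm p]

lemma inner_bracket_e3_zero (hanti : ∀ x y, B x y = -B y x)
    (h01 : B (e3 0) (e3 1) = p • e3 1) (h02 : B (e3 0) (e3 2) = p • e3 2)
    (h12 : B (e3 1) (e3 2) = 0) (x y : EuclideanSpace ℝ (Fin 3)) : ⟪B x y, e3 0⟫ = 0 := by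
  suffices B.compr₂ (innerₛₗ ℝ (e3 0)) = 0 by
    simpa [real_inner_comm] using congr($this x y)
  refine LinearMap.ext_basis (EuclideanSpace.basisFun _ ℝ).toBasis
    (EuclideanSpace.basisFun _ ℝ).toBasis fun i j ↦ ?_
  have hdiag : ∀ k, B (e3 k) (e3 k) = 0 := fun k ↦ apply_self_eq_zero_of_antisymm B hanti _
  have hbasis : ⇑(EuclideanSpace.basisFun (Fin 3) ℝ).toBasis = e3 := by
    funext k
    simp [e3]
  simp only [hbasis, LinearMap.compr₂_apply, innerₛₗ_apply_apply, LinearMap.zero_apply]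
  fin_cases i <;> fin_cases j <;>
    simp only [Fin.zero_eta, Fin.mk_one, Fin.reduceFinMk, hdiag, h01, h02, h12,
      hanti (e3 1) (e3 0), hanti (e3 2) (e3 0), hanti (e3 2) (e3 1)] <;>
    simp [e3, inner_smul_right, EuclideanSpace.inner_single_right]

end Example

/-- Example 2, torse-forming Reeb vector field: for the
3-dimensional Lie group with bracket [e₀,e₁] = p·e₁, [e₀,e₂] = p·e₂, [e₁,e₂] = 0,
one has ∇ₓξ = −p·(x − η(x)ξ) with ξ = e₀ and η = ⟪·,e₀⟫; i.e. ξ is torse-forming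
with constant f = −p. -/
theorem stmt_17 (p : ℝ)
    (B : EuclideanSpace ℝ (Fin 3) →ₗ[ℝ] EuclideanSpace ℝ (Fin 3) →ₗ[ℝ] EuclideanSpace ℝ (Fin 3))
    (hanti : ∀ x y : EuclideanSpace ℝ (Fin 3), B x y = -B y x)
    (h01 : B (e3 0) (e3 1) = p • e3 1)
    (h02 : B (e3 0) (e3 2) = p • e3 2)
    (h12 : B (e3 1) (e3 2) = 0)
    (nab : EuclideanSpace ℝ (Fin 3) →ₗ[ℝ] EuclideanSpace ℝ (Fin 3) →ₗ[ℝ] EuclideanSpace ℝ (Fin 3))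
    (hKoszul : ∀ x y z : EuclideanSpace ℝ (Fin 3),
      2 * ⟪nab x y, z⟫ = ⟪B x y, z⟫ - ⟪B y z, x⟫ + ⟪B z x, y⟫) :
    ∀ x : EuclideanSpace ℝ (Fin 3),
      nab x (e3 0) = (-p) • (x - ⟪x, e3 0⟫ • e3 0) := by
  have hB0 := bracket_e3_zero_apply hanti h01 h02
  intro x
  rw [koszul_apply_right_eq_neg_of_isSymmetric B nab hanti hKoszul
    (isSymmetric_of_apply_eq_smul_sub_inner_smul p (e3 0) hB0)
    (inner_bracket_e3_zero hanti h01 h02 h12), hB0, neg_smul]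
end

section
/- (Example 2, η-Ricci soliton.) In the setting of the 3-dimensional Lie algebra on ℝ³ with standard inner product, bracket [e₀,e₁] = p·e₁, [e₀,e₂] = p·e₂, [e₁,e₂] = 0 (p ∈ ℝ), Koszul product ∇, curvature R, Ricci form ρ(x,y) = Σᵢ₌₀² ⟪R(eᵢ,x)y, eᵢ⟫, ξ = e₀, η = ⟪·,e₀⟫, and Lie derivative (L_ξ g)(x,y) = −⟪[e₀,x], y⟫ − ⟪x, [e₀,y]⟫: the equation ρ(x,y) = −½(L_ξ g)(x,y) − λ⟪x,y⟫ − ν·η(x)η(y) holds for all x, y with constants (λ, ν) = (p + 2p², −p); i.e. the manifold admits an η-Ricci soliton with potential ξ and constants (λ, μ, ν) = (p + 2p², 0, −p). -/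
/-!
The bracket is `[x, y] = p (η(x) y - η(y) x)` with `η = ⟪·, e₀⟫`: for `p ≠ 0` this is the Lie
algebra of the hyperbolic space of curvature `-p²`. The Koszul formula then gives
`∇ₓ y = p (⟪x, y⟫ e₀ - η(y) x)`, so the metric has constant sectional curvature `-p²` and
`ρ = -2p² g`. On the other side `L_ξ g = -2p (g - η ⊗ η)`, and the soliton equation is the identity
`-2p² = p - (p + 2p²)` together with `-p + p = 0` for the `η ⊗ η` part.
-/

open RealInnerProductSpace

section HyperbolicLieAlgebra

variable {E : Type*} [NormedAddCommGroup E] [InnerProductSpace ℝ E]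

theorem levi_civita_eq_of_bracket_eq (p : ℝ) (ξ : E) (B nab : E → E → E)
    (hB : ∀ x y, B x y = p • (⟪x, ξ⟫ • y - ⟪y, ξ⟫ • x))
    (hKoszul : ∀ x y z, 2 * ⟪nab x y, z⟫ = ⟪B x y, z⟫ - ⟪B y z, x⟫ + ⟪B z x, y⟫) (x y : E) :
    nab x y = p • (⟪x, y⟫ • ξ - ⟪y, ξ⟫ • x) := by
  refine ext_inner_right ℝ fun z => ?_
  have h := hKoszul x y z
  simp only [hB, real_inner_smul_left, inner_sub_left] at h ⊢
  simp only [real_inner_comm] at h ⊢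
  linarith

theorem curvature_eq_of_levi_civita_eq (p : ℝ) (ξ : E) (hξ : ⟪ξ, ξ⟫ = 1) (B nab : E → E → E)
    (hB : ∀ x y, B x y = p • (⟪x, ξ⟫ • y - ⟪y, ξ⟫ • x))
    (hnab : ∀ x y, nab x y = p • (⟪x, y⟫ • ξ - ⟪y, ξ⟫ • x)) (x y z : E) :
    nab x (nab y z) - nab y (nab x z) - nab (B x y) z = (-p ^ 2) • (⟪y, z⟫ • x - ⟪x, z⟫ • y) := by
  simp only [hnab, hB, real_inner_smul_left, real_inner_smul_right, inner_sub_left,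
    inner_sub_right, hξ, real_inner_comm y x]
  module

theorem sum_inner_curvature_of_constant_curvature {ι : Type*} [Fintype ι]
    (b : OrthonormalBasis ι ℝ E) (c : ℝ) (x y : E) :
    ∑ i, ⟪c • (⟪x, y⟫ • b i - ⟪b i, y⟫ • x), b i⟫ = (Fintype.card ι - 1) * c * ⟪x, y⟫ := by
  have hsum : ∑ i, ⟪b i, y⟫ * ⟪x, b i⟫ = ⟪x, y⟫ := by
    simpa only [mul_comm] using b.sum_inner_mul_inner x y
  simp only [real_inner_smul_left, inner_sub_left, b.inner_eq_one, mul_sub, Finset.sum_sub_distrib,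
    ← Finset.mul_sum, Finset.sum_const, Finset.card_univ, nsmul_eq_mul, hsum]
  ring

end HyperbolicLieAlgebra

theorem bracket_eq_of_basis_brackets (p : ℝ)
    (B : EuclideanSpace ℝ (Fin 3) →ₗ[ℝ] EuclideanSpace ℝ (Fin 3) →ₗ[ℝ] EuclideanSpace ℝ (Fin 3))
    (hanti : ∀ x y : EuclideanSpace ℝ (Fin 3), B x y = -B y x)
    (h01 : B (e3 0) (e3 1) = p • e3 1)
    (h02 : B (e3 0) (e3 2) = p • e3 2)
    (h12 : B (e3 1) (e3 2) = 0) (x y : EuclideanSpace ℝ (Fin 3)) :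
    B x y = p • (⟪x, e3 0⟫ • y - ⟪y, e3 0⟫ • x) := by
  let B' : EuclideanSpace ℝ (Fin 3) →ₗ[ℝ] EuclideanSpace ℝ (Fin 3) →ₗ[ℝ] EuclideanSpace ℝ (Fin 3) :=
    LinearMap.mk₂ ℝ (fun x y => p • (⟪x, e3 0⟫ • y - ⟪y, e3 0⟫ • x))
      (fun _ _ _ => by simp only [inner_add_left]; module)
      (fun _ _ _ => by simp only [real_inner_smul_left]; module)
      (fun _ _ _ => by simp only [inner_add_left]; module)
      (fun _ _ _ => by simp only [real_inner_smul_left]; module)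
  have hB_self (v) : B v v = 0 := by linear_combination (norm := module) (1 / 2 : ℝ) • hanti v v
  have hB : B = B' := by
    refine LinearMap.ext_basis (EuclideanSpace.basisFun (Fin 3) ℝ).toBasis
      (EuclideanSpace.basisFun (Fin 3) ℝ).toBasis fun i j => ?_
    simp only [OrthonormalBasis.coe_toBasis, basisFun_eq_e3]
    change B (e3 i) (e3 j) = p • (⟪e3 i, e3 0⟫ • e3 j - ⟪e3 j, e3 0⟫ • e3 i)
    simp only [inner_e3_e3]
    fin_cases i <;> fin_cases j <;>
      simp [hB_self, hanti (e3 1) (e3 0), hanti (e3 2) (e3 0), hanti (e3 2) (e3 1), h01, h02, h12]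
  rw [hB]
  rfl

/-- Example 2, η-Ricci soliton: for the 3-dimensional Lie group with
bracket [e₀,e₁] = p·e₁, [e₀,e₂] = p·e₂, [e₁,e₂] = 0, the equation
ρ(x,y) = −½(L_ξ g)(x,y) − λ⟪x,y⟫ − ν·η(x)η(y) holds with
(λ,ν) = (p + 2p², −p), where ξ = e₀, η = ⟪·,e₀⟫ and
(L_ξ g)(x,y) = −⟪[e₀,x],y⟫ − ⟪x,[e₀,y]⟫; i.e. the manifold admits an η-Ricci
soliton with potential ξ and constants (λ,μ,ν) = (p + 2p², 0, −p). -/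
theorem stmt_18 (p : ℝ)
    (B : EuclideanSpace ℝ (Fin 3) →ₗ[ℝ] EuclideanSpace ℝ (Fin 3) →ₗ[ℝ] EuclideanSpace ℝ (Fin 3))
    (hanti : ∀ x y : EuclideanSpace ℝ (Fin 3), B x y = -B y x)
    (h01 : B (e3 0) (e3 1) = p • e3 1)
    (h02 : B (e3 0) (e3 2) = p • e3 2)
    (h12 : B (e3 1) (e3 2) = 0)
    (nab : EuclideanSpace ℝ (Fin 3) →ₗ[ℝ] EuclideanSpace ℝ (Fin 3) →ₗ[ℝ] EuclideanSpace ℝ (Fin 3))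
    (hKoszul : ∀ x y z : EuclideanSpace ℝ (Fin 3),
      2 * ⟪nab x y, z⟫ = ⟪B x y, z⟫ - ⟪B y z, x⟫ + ⟪B z x, y⟫)
    (R : EuclideanSpace ℝ (Fin 3) → EuclideanSpace ℝ (Fin 3) →
      EuclideanSpace ℝ (Fin 3) → EuclideanSpace ℝ (Fin 3))
    (hR : ∀ x y z : EuclideanSpace ℝ (Fin 3),
      R x y z = nab x (nab y z) - nab y (nab x z) - nab (B x y) z)
    (ρ : EuclideanSpace ℝ (Fin 3) → EuclideanSpace ℝ (Fin 3) → ℝ)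
    (hρ : ∀ x y : EuclideanSpace ℝ (Fin 3), ρ x y = ∑ i : Fin 3, ⟪R (e3 i) x y, e3 i⟫)
    (Lg : EuclideanSpace ℝ (Fin 3) → EuclideanSpace ℝ (Fin 3) → ℝ)
    (hLg : ∀ x y : EuclideanSpace ℝ (Fin 3),
      Lg x y = -⟪B (e3 0) x, y⟫ - ⟪x, B (e3 0) y⟫) :
    ∀ x y : EuclideanSpace ℝ (Fin 3),
      ρ x y = -(1 / 2) * Lg x y - (p + 2 * p ^ 2) * ⟪x, y⟫
        - (-p) * (⟪x, e3 0⟫ * ⟪y, e3 0⟫) := by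
  intro x y
  have hξ : ⟪e3 0, e3 0⟫ = 1 := by rw [inner_e3_e3, if_pos rfl]
  have hB := bracket_eq_of_basis_brackets p B hanti h01 h02 h12
  have hnab := levi_civita_eq_of_bracket_eq p (e3 0) (B · ·) (nab · ·) hB hKoszul
  have hcurv (x y z) : R x y z = (-p ^ 2) • (⟪y, z⟫ • x - ⟪x, z⟫ • y) :=
    (hR x y z).trans (curvature_eq_of_levi_civita_eq p (e3 0) hξ (B · ·) (nab · ·) hB hnab x y z)
  have hricci : ρ x y = -2 * p ^ 2 * ⟪x, y⟫ := by
    have h := sum_inner_curvature_of_constant_curvature (EuclideanSpace.basisFun (Fin 3) ℝ)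
      (-p ^ 2) x y
    simp only [basisFun_eq_e3, Fintype.card_fin] at h
    simp only [hρ, hcurv, h]
    ring
  rw [hricci, hLg, hB, hB]
  simp only [real_inner_smul_left, real_inner_smul_right, inner_sub_left, inner_sub_right, hξ]
  simp only [real_inner_comm]
  ring
end

section
/- (Example 2, class F₅ property.) Consider ℝ³ with the standard inner product ⟪·,·⟫, standard basis e₀, e₁, e₂, the Lie bracket [e₀,e₁] = p·e₁, [e₀,e₂] = p·e₂, [e₁,e₂] = 0 (p ∈ ℝ), and the Koszul product ∇ defined by 2⟪∇ₓy, z⟫ = ⟪[x,y], z⟫ − ⟪[y,z], x⟫ + ⟪[z,x], y⟫. Let ξ = e₀, η = ⟪·, e₀⟫, and let φ be the linear map with φ(e₀) = 0, φ(e₁) = e₂, φ(e₂) = e₁. Then for all x, y ∈ ℝ³: ∇ₓ(φ(y)) − φ(∇ₓy) = p·(⟪x, φ(y)⟫·ξ + η(y)·φ(x)); i.e. the structure satisfies the defining identity (∇ₓφ)y = −f{g(x, φy)ξ + η(y)φx} of an F₅-manifold with torse-forming Reeb vector field with constant f = −p. -/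
/-!
The bracket is `[x, y] = p (η(x) y - η(y) x)` with `η = ⟪·, ξ⟫`, `ξ = e₀`: an antisymmetric
bilinear map is determined by its values on pairs of basis vectors. For a bracket of this shape
the Koszul formula gives `∇ₓy = p (⟪x, y⟫ ξ - η(y) x)` in any real inner product space. Since
`φ ξ = 0` and `η ∘ φ = 0`, the identity is then a direct computation.
-/

open RealInnerProductSpace

section EtaBracket

variable {E : Type*} [NormedAddCommGroup E] [InnerProductSpace ℝ E]

noncomputable def etaBracket (ξ : E) : E →ₗ[ℝ] E →ₗ[ℝ] E :=
  LinearMap.mk₂ ℝ (fun x y => ⟪x, ξ⟫ • y - ⟪y, ξ⟫ • x)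
    (fun _ _ _ => by simp only [inner_add_left]; module)
    (fun _ _ _ => by simp only [real_inner_smul_left]; module)
    (fun _ _ _ => by simp only [inner_add_left]; module)
    (fun _ _ _ => by simp only [real_inner_smul_left]; module)

@[simp]
theorem etaBracket_apply (ξ x y : E) : etaBracket ξ x y = ⟪x, ξ⟫ • y - ⟪y, ξ⟫ • x := rfl

theorem koszul_eq_of_eq_smul_etaBracket {B : E →ₗ[ℝ] E →ₗ[ℝ] E} {nab : E → E → E} {p : ℝ}
    {ξ : E} (hB : B = p • etaBracket ξ)
    (hKoszul : ∀ x y z, 2 * ⟪nab x y, z⟫ = ⟪B x y, z⟫ - ⟪B y z, x⟫ + ⟪B z x, y⟫) (x y : E) :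
    nab x y = p • (⟪x, y⟫ • ξ - ⟪y, ξ⟫ • x) := by
  refine ext_inner_right ℝ fun z => ?_
  have h := hKoszul x y z
  simp only [hB, LinearMap.smul_apply, etaBracket_apply, inner_sub_left,
    real_inner_smul_left] at h ⊢
  rw [real_inner_comm x z, real_inner_comm y z, real_inner_comm x y] at h
  rw [real_inner_comm z ξ]
  linear_combination h / 2

theorem nab_apply_sub_apply_nab_eq {nab : E → E → E} {p : ℝ} {ξ : E} {φ : E →ₗ[ℝ] E}
    (hnab : ∀ x y, nab x y = p • (⟪x, y⟫ • ξ - ⟪y, ξ⟫ • x))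
    (hφξ : φ ξ = 0) (hφη : ∀ y, ⟪φ y, ξ⟫ = 0) (x y : E) :
    nab x (φ y) - φ (nab x y) = p • (⟪x, φ y⟫ • ξ + ⟪y, ξ⟫ • φ x) := by
  simp only [hnab, hφη, map_smul, map_sub, hφξ]
  module

end EtaBracket

section StandardBasis

theorem e3_eq_basisFun (i : Fin 3) : e3 i = EuclideanSpace.basisFun (Fin 3) ℝ i := by
  simp [e3]

theorem norm_e3 (i : Fin 3) : ‖e3 i‖ = 1 := by
  simp [e3]

theorem eq_smul_etaBracket_e3 {p : ℝ}
    {B : EuclideanSpace ℝ (Fin 3) →ₗ[ℝ] EuclideanSpace ℝ (Fin 3) →ₗ[ℝ] EuclideanSpace ℝ (Fin 3)}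
    (hanti : ∀ x y, B x y = -B y x)
    (h01 : B (e3 0) (e3 1) = p • e3 1) (h02 : B (e3 0) (e3 2) = p • e3 2)
    (h12 : B (e3 1) (e3 2) = 0) : B = p • etaBracket (e3 0) := by
  have := IsAddTorsionFree.of_module_rat (M := EuclideanSpace ℝ (Fin 3))
  have hself : ∀ x, B x x = 0 := fun x => self_eq_neg.mp (hanti x x)
  let b := (EuclideanSpace.basisFun (Fin 3) ℝ).toBasis
  refine LinearMap.ext_basis b b fun i j => ?_
  simp only [b, OrthonormalBasis.coe_toBasis, ← e3_eq_basisFun]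
  fin_cases i <;> fin_cases j <;>
    simp [hself, h01, h02, h12, hanti (e3 1) (e3 0), hanti (e3 2) (e3 0),
      hanti (e3 2) (e3 1), inner_e3_e3, norm_e3]

theorem inner_apply_e3_zero {φ : EuclideanSpace ℝ (Fin 3) →ₗ[ℝ] EuclideanSpace ℝ (Fin 3)}
    (hφ0 : φ (e3 0) = 0) (hφ1 : φ (e3 1) = e3 2) (hφ2 : φ (e3 2) = e3 1)
    (y : EuclideanSpace ℝ (Fin 3)) : ⟪φ y, e3 0⟫ = 0 := by
  have h : innerₛₗ ℝ (e3 0) ∘ₗ φ = 0 := by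
    refine (EuclideanSpace.basisFun (Fin 3) ℝ).toBasis.ext fun i => ?_
    simp only [OrthonormalBasis.coe_toBasis, ← e3_eq_basisFun]
    fin_cases i <;> simp [hφ0, hφ1, hφ2, inner_e3_e3]
  rw [real_inner_comm]
  exact LinearMap.congr_fun h y

end StandardBasis

/-- Example 2, class F₅ property: for the 3-dimensional Lie group
with bracket [e₀,e₁] = p·e₁, [e₀,e₂] = p·e₂, [e₁,e₂] = 0, ξ = e₀, η = ⟪·,e₀⟫ and
φ given by φ(e₀) = 0, φ(e₁) = e₂, φ(e₂) = e₁, one has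
(∇ₓφ)y = p·(⟪x,φ(y)⟫ξ + η(y)φ(x)); i.e. the structure satisfies the defining
identity (∇ₓφ)y = −f{g(x,φy)ξ + η(y)φx} of an F₅-manifold with torse-forming
Reeb vector field with constant f = −p. -/
theorem stmt_19 (p : ℝ)
    (B : EuclideanSpace ℝ (Fin 3) →ₗ[ℝ] EuclideanSpace ℝ (Fin 3) →ₗ[ℝ] EuclideanSpace ℝ (Fin 3))
    (hanti : ∀ x y : EuclideanSpace ℝ (Fin 3), B x y = -B y x)
    (h01 : B (e3 0) (e3 1) = p • e3 1)
    (h02 : B (e3 0) (e3 2) = p • e3 2)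
    (h12 : B (e3 1) (e3 2) = 0)
    (nab : EuclideanSpace ℝ (Fin 3) →ₗ[ℝ] EuclideanSpace ℝ (Fin 3) →ₗ[ℝ] EuclideanSpace ℝ (Fin 3))
    (hKoszul : ∀ x y z : EuclideanSpace ℝ (Fin 3),
      2 * ⟪nab x y, z⟫ = ⟪B x y, z⟫ - ⟪B y z, x⟫ + ⟪B z x, y⟫)
    (φ : EuclideanSpace ℝ (Fin 3) →ₗ[ℝ] EuclideanSpace ℝ (Fin 3))
    (hφ0 : φ (e3 0) = 0) (hφ1 : φ (e3 1) = e3 2) (hφ2 : φ (e3 2) = e3 1) :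
    ∀ x y : EuclideanSpace ℝ (Fin 3),
      nab x (φ y) - φ (nab x y) =
        p • (⟪x, φ y⟫ • e3 0 + ⟪y, e3 0⟫ • φ x) := by
  have hB := eq_smul_etaBracket_e3 hanti h01 h02 h12
  exact nab_apply_sub_apply_nab_eq (koszul_eq_of_eq_smul_etaBracket hB hKoszul) hφ0
    (inner_apply_e3_zero hφ0 hφ1 hφ2)
end
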